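/- arXiv:2512.04584 — 5 statements merged into one kernel-verified Lean document; each statement's English description precedes it below -/
import Mathlib

section
/- For every integer n ≥ 3 and every real x ∈ [0,1], one has (1+x)^((n-2)/n) ≤ 1 + ((n-2)/n)·x − ((n-2)/(4n²))·x². -/
/-!
With `p = (n - 2) / n` the coefficient `(n - 2) / (4 n²)` is `p (1 - p) / 8`. Bernoulli's inequality
applied to `(1 + y)⁻¹ = 1 - y / (1 + y)` with the exponent `1 - p ∈ [0, 1]` bounds the derivative
`p (1 + y) ^ (p - 1)` of `(1 + y) ^ p` by `p - p (1 - p) y / 2` on `[0, 1]`; integrating from `0`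
gives `(1 + x) ^ p ≤ 1 + p x - p (1 - p) x² / 4` on `[0, 1]`.
-/

open Real Set

theorem one_add_rpow_sub_one_le {p y : ℝ} (hp0 : 0 ≤ p) (hp1 : p ≤ 1) (hy : -1 < y) :
    (1 + y) ^ (p - 1) ≤ 1 - (1 - p) * y / (1 + y) := by
  have hpos : 0 < 1 + y := by linarith
  have hinv : (1 + y)⁻¹ = 1 + -(y / (1 + y)) := by field_simp; ring
  have hs : -1 ≤ -(y / (1 + y)) := by
    rw [neg_le_neg_iff, div_le_one hpos]; linarith
  calc (1 + y) ^ (p - 1) = ((1 + y)⁻¹) ^ (1 - p) := by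
        rw [inv_rpow hpos.le, ← rpow_neg hpos.le, neg_sub]
    _ ≤ 1 + (1 - p) * -(y / (1 + y)) := by
        rw [hinv]; exact rpow_one_add_le_one_add_mul_self hs (by linarith) (by linarith)
    _ = 1 - (1 - p) * y / (1 + y) := by ring

theorem one_add_rpow_le_one_add_mul_sub_mul_sq {p x : ℝ} (hp0 : 0 ≤ p) (hp1 : p ≤ 1)
    (hx0 : 0 ≤ x) (hx1 : x ≤ 1) :
    (1 + x) ^ p ≤ 1 + p * x - p * (1 - p) / 4 * x ^ 2 := by
  set c := p * (1 - p) / 4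
  let g : ℝ → ℝ := fun y ↦ 1 + p * y - c * y ^ 2 - (1 + y) ^ p
  have hderiv (y : ℝ) (hy : -1 < y) :
      HasDerivAt g (p - c * (2 * y) - p * (1 + y) ^ (p - 1)) y := by
    have hpow := ((hasDerivAt_id' y).const_add 1).rpow_const (p := p) (Or.inl (by linarith))
    have hsq := (hasDerivAt_pow 2 y).const_mul c
    refine ((((hasDerivAt_id' y).const_mul p).const_add 1).fun_sub hsq).fun_sub hpow
      |>.congr_deriv ?_
    norm_num
  have hmono : MonotoneOn g (Icc 0 1) := by
    refine monotoneOn_of_hasDerivWithinAt_nonneg (convex_Icc 0 1)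
      (fun y hy ↦ (hderiv y (by linarith [hy.1])).continuousAt.continuousWithinAt)
      (fun y hy ↦ (hderiv y (by linarith [(interior_subset hy).1])).hasDerivWithinAt) ?_
    intro y hy
    rw [interior_Icc] at hy
    obtain ⟨hy0, hy1⟩ := hy
    have hbound := mul_le_mul_of_nonneg_left
      (one_add_rpow_sub_one_le (y := y) hp0 hp1 (by linarith)) hp0
    have hhalf : y / 2 ≤ y / (1 + y) :=
      div_le_div_of_nonneg_left hy0.le (by linarith) (by linarith)
    have hq : 0 ≤ p * (1 - p) := mul_nonneg hp0 (by linarith)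
    calc (0 : ℝ) ≤ p * (1 - p) * (y / (1 + y) - y / 2) := mul_nonneg hq (by linarith)
      _ = p - c * (2 * y) - p * (1 - (1 - p) * y / (1 + y)) := by ring
      _ ≤ p - c * (2 * y) - p * (1 + y) ^ (p - 1) := by linarith
  have hg0 : g 0 = 0 := by simp [g]
  have := hmono ⟨le_rfl, zero_le_one⟩ ⟨hx0, hx1⟩ hx0
  rw [hg0] at this
  linarith

theorem stmt_0 (n : ℕ) (hn : 3 ≤ n) (x : ℝ) (hx0 : 0 ≤ x) (hx1 : x ≤ 1) :
    (1 + x) ^ (((n : ℝ) - 2) / n) ≤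
      1 + ((n : ℝ) - 2) / n * x - ((n : ℝ) - 2) / (4 * (n : ℝ) ^ 2) * x ^ 2 := by
  have hn3 : (3 : ℝ) ≤ n := by exact_mod_cast hn
  set p : ℝ := ((n : ℝ) - 2) / n with hp
  have hp0 : 0 ≤ p := div_nonneg (by linarith) (by linarith)
  have hp1 : p ≤ 1 := by rw [hp, div_le_one (by linarith)]; linarith
  have hcoeff : ((n : ℝ) - 2) / (4 * (n : ℝ) ^ 2) = p * (1 - p) / 8 := by
    rw [hp]; field_simp; ring
  have hsq : 0 ≤ p * (1 - p) * x ^ 2 := mul_nonneg (mul_nonneg hp0 (by linarith)) (sq_nonneg x)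
  rw [hcoeff]
  linarith [one_add_rpow_le_one_add_mul_sub_mul_sq hp0 hp1 hx0 hx1]
end

section
/- Let R > 0, n ≥ 2 an integer, and β ∈ [0,2]. Set R₂ = R(1+β/2)^(1/n). Then for n ≥ 3, ∫_R^{R₂} (1/R² − 1/r²) r^{n−1} dr ≥ (1/(nR²))(R₂ⁿ − Rⁿ) − (1/(n−2))(R₂^{n−2} − R^{n−2}) ≥ (R^{n−2}/(16 n²))·β². -/
/-!
Away from `r = 0` the integrand is `r ^ (n - 1) / R ^ 2 - r ^ (n - 3)`, so the first inequality
is in fact an equality. For the second, on `[R, R₂]` the integrand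
`r ^ (n - 3) (r ^ 2 - R ^ 2) / R ^ 2` is at least `2 R ^ (n - 2) (r - R) / R ^ 2`, so the integral
is at least `R ^ (n - 2) ((R₂ - R) / R) ^ 2`. Since `R₂ ^ n ≤ 2 R ^ n`, the mean value bound
`R₂ ^ n - R ^ n ≤ n R₂ ^ (n - 1) (R₂ - R)` gives `R ^ n β / 2 ≤ 2 n R ^ (n - 1) (R₂ - R)`,
i.e. `(R₂ - R) / R ≥ β / (4 n)`.
-/

open intervalIntegral

theorem integral_sub_one_div_sq_mul_pow (a b c : ℝ) {n : ℕ} (hn : 3 ≤ n) :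
    ∫ r in a..b, (c - 1 / r ^ 2) * r ^ (n - 1) =
      c / n * (b ^ n - a ^ n) - 1 / ((n : ℝ) - 2) * (b ^ (n - 2) - a ^ (n - 2)) := by
  have hae : ∀ᵐ r : ℝ, r ∈ Set.uIoc a b →
      (c - 1 / r ^ 2) * r ^ (n - 1) = c * r ^ (n - 1) - r ^ (n - 3) := by
    filter_upwards [(Set.countable_singleton (0 : ℝ)).ae_notMem MeasureTheory.volume] with r hr _
    rw [show n - 1 = n - 3 + 2 by omega, pow_add]
    field_simp [Set.mem_singleton_iff.not.mp hr]
  rw [integral_congr_ae hae, integral_sub (Continuous.intervalIntegrable (by fun_prop) _ _)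
    (Continuous.intervalIntegrable (by fun_prop) _ _), integral_const_mul,
    integral_pow, integral_pow, show n - 1 + 1 = n by omega, show n - 3 + 1 = n - 2 by omega,
    Nat.cast_sub (by omega : 1 ≤ n), Nat.cast_sub (by omega : 3 ≤ n)]
  push_cast
  ring_nf

theorem pow_mul_sq_sub_div_le_integral {a b : ℝ} (ha : 0 < a) (hab : a ≤ b) {n : ℕ}
    (hn : 3 ≤ n) :
    a ^ (n - 2) * ((b - a) / a) ^ 2 ≤ ∫ r in a..b, (1 / a ^ 2 - 1 / r ^ 2) * r ^ (n - 1) := by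
  have hpoint : ∀ r ∈ Set.Icc a b,
      a ^ (n - 2) / a ^ 2 * (2 * (r - a)) ≤ (1 / a ^ 2 - 1 / r ^ 2) * r ^ (n - 1) := by
    rintro r ⟨har, -⟩
    have hr : 0 < r := ha.trans_le har
    calc a ^ (n - 2) / a ^ 2 * (2 * (r - a)) = a ^ (n - 3) * (2 * a * (r - a)) / a ^ 2 := by
          rw [show n - 2 = n - 3 + 1 by omega, pow_succ]; ring
      _ ≤ r ^ (n - 3) * ((r + a) * (r - a)) / a ^ 2 := by
          gcongr
          linarith
      _ = (1 / a ^ 2 - 1 / r ^ 2) * r ^ (n - 1) := by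
          rw [show n - 1 = n - 3 + 2 by omega, pow_add]; field_simp; ring
  have hcont :
      ContinuousOn (fun r : ℝ => (1 / a ^ 2 - 1 / r ^ 2) * r ^ (n - 1)) (Set.uIcc a b) := by
    rw [Set.uIcc_of_le hab]
    exact continuousOn_const.sub (continuousOn_const.div (continuousOn_pow 2)
      fun r hr => by have := ha.trans_le hr.1; positivity) |>.mul (continuousOn_pow _)
  calc a ^ (n - 2) * ((b - a) / a) ^ 2 = ∫ r in a..b, a ^ (n - 2) / a ^ 2 * (2 * (r - a)) := by
        rw [integral_const_mul, integral_const_mul, integral_comp_sub_right (fun x => x)]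
        simp only [sub_self, integral_id, ne_eq, OfNat.ofNat_ne_zero, not_false_eq_true, zero_pow,
          sub_zero]
        field_simp
    _ ≤ _ := integral_mono_on hab (Continuous.intervalIntegrable (by fun_prop) _ _)
        hcont.intervalIntegrable hpoint

theorem pow_sub_pow_le_of_pow_le_two_mul {a b : ℝ} (ha : 0 < a) (hab : a ≤ b) {n : ℕ}
    (hb : b ^ n ≤ 2 * a ^ n) : b ^ n - a ^ n ≤ 2 * n * a ^ (n - 1) * (b - a) := by
  obtain _ | m := n
  · simp
  have hpow : b ^ m ≤ 2 * a ^ m := by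
    refine le_of_mul_le_mul_right ?_ ha
    calc b ^ m * a ≤ b ^ (m + 1) := by
          rw [pow_succ]; gcongr; exact pow_nonneg (ha.le.trans hab) m
      _ ≤ 2 * a ^ m * a := by rw [mul_assoc, ← pow_succ]; exact hb
  calc b ^ (m + 1) - a ^ (m + 1) ≤ |b ^ (m + 1) - a ^ (m + 1)| := le_abs_self _
    _ ≤ |b - a| * (m + 1 : ℕ) * max |b| |a| ^ m := abs_pow_sub_pow_le ..
    _ = (b - a) * (m + 1 : ℕ) * b ^ m := by
        rw [abs_of_nonneg (sub_nonneg.2 hab), abs_of_nonneg (ha.le.trans hab), abs_of_pos ha,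
          max_eq_left hab]
    _ ≤ (b - a) * (m + 1 : ℕ) * (2 * a ^ m) := by gcongr
    _ = _ := by rw [Nat.add_sub_cancel]; push_cast; ring

theorem stmt_2 (n : ℕ) (hn : 3 ≤ n) (R β : ℝ) (hR : 0 < R) (hβ0 : 0 ≤ β) (hβ2 : β ≤ 2)
    (R₂ : ℝ) (hR₂ : R₂ = R * (1 + β / 2) ^ ((1 : ℝ) / n)) :
    (∫ r in R..R₂, (1 / R ^ 2 - 1 / r ^ 2) * r ^ (n - 1)) ≥
        1 / (n * R ^ 2) * (R₂ ^ n - R ^ n) - 1 / ((n : ℝ) - 2) * (R₂ ^ (n - 2) - R ^ (n - 2))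
      ∧ 1 / (n * R ^ 2) * (R₂ ^ n - R ^ n) - 1 / ((n : ℝ) - 2) * (R₂ ^ (n - 2) - R ^ (n - 2)) ≥
        R ^ (n - 2) / (16 * n ^ 2) * β ^ 2 := by
  have hn0 : (0 : ℝ) < n := by positivity
  have hR₂n : R₂ ^ n = R ^ n * (1 + β / 2) := by
    rw [hR₂, mul_pow, ← Real.rpow_natCast ((1 + β / 2) ^ _), ← Real.rpow_mul (by linarith),
      one_div_mul_cancel hn0.ne', Real.rpow_one]
  have hRR₂ : R ≤ R₂ := by
    refine (pow_le_pow_iff_left₀ hR.le (by rw [hR₂]; positivity) (by omega : n ≠ 0)).1 ?_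
    rw [hR₂n]
    nlinarith [pow_pos hR n]
  have hgap : β / (4 * n) ≤ (R₂ - R) / R := by
    have h := pow_sub_pow_le_of_pow_le_two_mul hR hRR₂ (by rw [hR₂n]; nlinarith [pow_pos hR n])
    rw [hR₂n, ← pow_sub_one_mul (by omega : n ≠ 0)] at h
    rw [div_le_div_iff₀ (by positivity) hR]
    refine le_of_mul_le_mul_left ?_ (pow_pos hR (n - 1))
    linarith
  have hclosed := integral_sub_one_div_sq_mul_pow R R₂ (1 / R ^ 2) hn
  rw [div_div, mul_comm (R ^ 2)] at hclosed
  refine ⟨hclosed.ge, ?_⟩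
  rw [← hclosed]
  calc R ^ (n - 2) / (16 * n ^ 2) * β ^ 2 = R ^ (n - 2) * (β / (4 * n)) ^ 2 := by ring
    _ ≤ R ^ (n - 2) * ((R₂ - R) / R) ^ 2 := by gcongr
    _ ≤ _ := pow_mul_sq_sub_div_le_integral hR hRR₂ hn
end

section
/- Let n ≥ 2 be an integer, R > 0, α ∈ (−1/R, 0), c > 0, and define h as h(r) = c²(−α² + (n−1)(1+αr)/r²)e^{−2α(r−R)} for r ≥ R. Then for every r ≥ R, h(R) − h(r) ≥ (7(n−1)/16)·c²·(1/R² − 1/r²). -/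
/-!
Write `h = c² · φ` with `φ(x) = (-α² + d(1 + αx)/x²) e^{-2α(x-R)}` and `d = n - 1`. A direct
computation gives `φ'(x) = (2y³ - d(2 + 3y + 2y²)) e^{-2α(x-R)} / x³` with `y = αx ≤ 0`, and since
`2 + 3y + 2y² = 2(y + 3/4)² + 7/8` and `e^{-2α(x-R)} ≥ 1` for `x ≥ R`, this is at most
`-(7d/8)/x³`, the derivative of `(7d/16)/x²`. Comparing the two functions on `[R, r]` gives the claim.
-/

open Real Set

lemma sub_le_sub_of_hasDerivAt_le {f g f' g' : ℝ → ℝ} {a b : ℝ} (hab : a ≤ b)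
    (hf : ∀ x ∈ Icc a b, HasDerivAt f (f' x) x) (hg : ∀ x ∈ Icc a b, HasDerivAt g (g' x) x)
    (hle : ∀ x ∈ Ioo a b, f' x ≤ g' x) : f b - f a ≤ g b - g a := by
  have hmono : MonotoneOn (g - f) (Icc a b) := by
    refine monotoneOn_of_hasDerivWithinAt_nonneg (f' := g' - f') (convex_Icc a b)
      (fun x hx ↦ ((hg x hx).sub (hf x hx)).continuousAt.continuousWithinAt) (fun x hx ↦ ?_)
      (fun x hx ↦ ?_)
    · rw [interior_Icc] at hx
      exact ((hg x (Ioo_subset_Icc_self hx)).sub (hf x (Ioo_subset_Icc_self hx))).hasDerivWithinAt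
    · rw [interior_Icc] at hx
      exact sub_nonneg.mpr (hle x hx)
  have := hmono (left_mem_Icc.mpr hab) (right_mem_Icc.mpr hab) hab
  simp only [Pi.sub_apply] at this
  linarith

lemma hasDerivAt_const_div_sq (K : ℝ) {x : ℝ} (hx : x ≠ 0) :
    HasDerivAt (fun y ↦ K / y ^ 2) (-(2 * K) / x ^ 3) x := by
  refine ((hasDerivAt_const x K).div (hasDerivAt_pow 2 x) (pow_ne_zero 2 hx)).congr_deriv ?_
  field_simp
  ring

noncomputable def profile (d α R x : ℝ) : ℝ :=
  (-α ^ 2 + d * (1 + α * x) / x ^ 2) * exp (-2 * α * (x - R))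

noncomputable def profileDeriv (d α R x : ℝ) : ℝ :=
  (2 * (α * x) ^ 3 - d * (2 + 3 * (α * x) + 2 * (α * x) ^ 2)) * exp (-2 * α * (x - R)) / x ^ 3

lemma hasDerivAt_profile (d α R : ℝ) {x : ℝ} (hx : x ≠ 0) :
    HasDerivAt (profile d α R) (profileDeriv d α R x) x := by
  have hquot : HasDerivAt (fun y ↦ -α ^ 2 + d * (1 + α * y) / y ^ 2)
      ((d * α * x ^ 2 - d * (1 + α * x) * (2 * x)) / (x ^ 2) ^ 2) x := by
    have hnum : HasDerivAt (fun y ↦ d * (1 + α * y)) (d * α) x := by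
      simpa using (((hasDerivAt_id x).const_mul α).const_add 1).const_mul d
    simpa using (hnum.div (hasDerivAt_pow 2 x) (pow_ne_zero 2 hx)).const_add (-α ^ 2)
  have hexp : HasDerivAt (fun y ↦ exp (-2 * α * (y - R))) (exp (-2 * α * (x - R)) * (-2 * α)) x := by
    simpa using (((hasDerivAt_id x).sub_const R).const_mul (-2 * α)).exp
  refine (hquot.mul hexp).congr_deriv ?_
  unfold profileDeriv
  field_simp
  ring

lemma profileDeriv_le {d α R x : ℝ} (hd : 0 ≤ d) (hα : α ≤ 0) (hRx : R ≤ x) (hx : 0 < x) :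
    profileDeriv d α R x ≤ -(7 / 8 * d) / x ^ 3 := by
  have hαx : α * x ≤ 0 := mul_nonpos_of_nonpos_of_nonneg hα hx.le
  have hexp : 1 ≤ exp (-2 * α * (x - R)) := one_le_exp (by nlinarith)
  have hcoef : 2 * (α * x) ^ 3 - d * (2 + 3 * (α * x) + 2 * (α * x) ^ 2) ≤ -(7 / 8 * d) := by
    nlinarith [mul_nonneg hd (sq_nonneg (α * x + 3 / 4)), Odd.pow_nonpos (by decide : Odd 3) hαx]
  unfold profileDeriv
  gcongr
  nlinarith

lemma profile_sub_profile_ge {d α R r : ℝ} (hd : 0 ≤ d) (hα : α ≤ 0) (hR : 0 < R) (hRr : R ≤ r) :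
    7 * d / 16 * (1 / R ^ 2 - 1 / r ^ 2) ≤ profile d α R R - profile d α R r := by
  have hpos : ∀ x ∈ Icc R r, 0 < x := fun x hx ↦ hR.trans_le hx.1
  have := sub_le_sub_of_hasDerivAt_le hRr
    (fun x hx ↦ hasDerivAt_profile d α R (hpos x hx).ne')
    (fun x hx ↦ hasDerivAt_const_div_sq (7 * d / 16) (hpos x hx).ne')
    (fun x hx ↦ (profileDeriv_le hd hα hx.1.le (hpos x (Ioo_subset_Icc_self hx))).trans_eq (by ring))
  rw [mul_sub, mul_one_div, mul_one_div]
  linarith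

theorem stmt_5_general (n : ℕ) (hn : 2 ≤ n) (R α c : ℝ) (hR : 0 < R)
    (hα0 : α < 0)
    (h : ℝ → ℝ)
    (hh : ∀ r, h r = c ^ 2 * (-α ^ 2 + ((n : ℝ) - 1) * (1 + α * r) / r ^ 2) *
      Real.exp (-2 * α * (r - R))) :
    ∀ r, R ≤ r → h R - h r ≥ 7 * ((n : ℝ) - 1) / 16 * c ^ 2 * (1 / R ^ 2 - 1 / r ^ 2) := by
  intro r hRr
  have hd : (0 : ℝ) ≤ n - 1 := by
    have : (2 : ℝ) ≤ n := by exact_mod_cast hn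
    linarith
  have hprofile : ∀ x, h x = c ^ 2 * profile ((n : ℝ) - 1) α R x := fun x ↦ by
    rw [hh, profile, mul_assoc]
  calc 7 * ((n : ℝ) - 1) / 16 * c ^ 2 * (1 / R ^ 2 - 1 / r ^ 2)
      = c ^ 2 * (7 * ((n : ℝ) - 1) / 16 * (1 / R ^ 2 - 1 / r ^ 2)) := by ring
    _ ≤ c ^ 2 * (profile ((n : ℝ) - 1) α R R - profile ((n : ℝ) - 1) α R r) :=
      mul_le_mul_of_nonneg_left (profile_sub_profile_ge hd hα0.le hR hRr) (sq_nonneg c)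
    _ = h R - h r := by rw [hprofile, hprofile, mul_sub]

theorem stmt_5 (n : ℕ) (hn : 2 ≤ n) (R α c : ℝ) (hR : 0 < R)
    (hα1 : -(1 / R) < α) (hα0 : α < 0) (hc : 0 < c)
    (h : ℝ → ℝ)
    (hh : ∀ r, h r = c ^ 2 * (-α ^ 2 + ((n : ℝ) - 1) * (1 + α * r) / r ^ 2) *
      Real.exp (-2 * α * (r - R))) :
    ∀ r, R ≤ r → h R - h r ≥ 7 * ((n : ℝ) - 1) / 16 * c ^ 2 * (1 / R ^ 2 - 1 / r ^ 2) :=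
  stmt_5_general n hn R α c hR hα0 h hh
end

section
/- Let n ≥ 2, R > 0, α ∈ (−1/R, 0), c > 0, β ∈ [0,2], R₂ = R(1+β/2)^(1/n), and h(r) = c²(−α² + (n−1)(1+αr)/r²)e^{−2α(r−R)} for r ≥ R. Then ∫_R^{R₂} (h(R) − h(r)) r^{n−1} dr ≥ (7(n−1)R^{n−2}/(16²n²))·c²·β². -/
/-!
With `m = n - 1`, `x = -αR` and `s = r/R`, one has `h r = (c/R)² · H(s)` for
`H(s) = (-x² + m(1 - xs)/s²) e^{2x(s-1)}`. For `1 ≤ s ≤ √2` the bound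
`H(1) - H(s) ≥ (7m/16)(1 - 1/s²)` becomes a polynomial inequality once `e^t` is bounded below by
`1 + t` or above by `1/(1 - t)`, according to the sign of the prefactor of `e^t`.
Bounding `r^{n-1} ≥ R^{n-1}` leaves `∫_R^{Rσ} (1/R² - 1/r²) dr = (σ - 1)²/(Rσ)` with
`σⁿ = 1 + β/2`, and `σⁿ - 1 ≤ nσ^{n-1}(σ - 1)` gives `βσ ≤ 4n(σ - 1)`.
-/

open Real

section ScaledProfile

variable {m x s : ℝ}

lemma scaledH_numerator_mul_one_add_le (hm : 1 ≤ m) (hx : 0 ≤ x) (hs : 1 ≤ s) :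
    (m * (1 - x * s) - x ^ 2 * s ^ 2) * (1 + 2 * x * (s - 1)) ≤
      (m * (1 - x) - x ^ 2) * s ^ 2 - 7 * m / 16 * (s ^ 2 - 1) := by
  -- a quadratic in `x` with discriminant `-(7s + 8)(s - 1)/2 ≤ 0`
  have hq : 0 ≤ 2 * s * x ^ 2 - (s + 2) * x + 9 / 16 * (s + 1) := by
    nlinarith [sq_nonneg (4 * s * x - s - 2),
      mul_nonneg (by linarith : (0 : ℝ) ≤ 7 * s + 8) (by linarith : (0 : ℝ) ≤ s - 1)]
  nlinarith [mul_nonneg (by linarith : (0 : ℝ) ≤ s - 1) hq,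
    mul_nonneg (mul_nonneg (by linarith : (0 : ℝ) ≤ s - 1) hq) (by linarith : (0 : ℝ) ≤ m - 1),
    mul_nonneg (mul_nonneg (pow_nonneg hx 3) (sq_nonneg s)) (by linarith : (0 : ℝ) ≤ s - 1)]

lemma scaledH_numerator_le_mul_one_sub (hm : 1 ≤ m) (hx : 0 ≤ x) (hs1 : 1 ≤ s)
    (hs2 : s ^ 2 ≤ 2) :
    m * (1 - x * s) - x ^ 2 * s ^ 2 ≤
      ((m * (1 - x) - x ^ 2) * s ^ 2 - 7 * m / 16 * (s ^ 2 - 1)) * (1 - 2 * x * (s - 1)) := by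
  -- a quadratic in `x` with discriminant `-(s - 1)(49 + 161s + 63s² - 81s³)/64 ≤ 0`
  have hq : 0 ≤ 2 * s ^ 2 * x ^ 2 - (9 / 8 * s ^ 2 + s + 7 / 8) * x + 9 / 16 * (s + 1) := by
    have hcube : 81 * s ^ 3 ≤ 49 + 161 * s + 63 * s ^ 2 := by nlinarith
    nlinarith [sq_nonneg (4 * s ^ 2 * x - (9 / 8 * s ^ 2 + s + 7 / 8)),
      mul_nonneg (by linarith : (0 : ℝ) ≤ s - 1)
        (by linarith : (0 : ℝ) ≤ 49 + 161 * s + 63 * s ^ 2 - 81 * s ^ 3)]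
  nlinarith [mul_nonneg (by linarith : (0 : ℝ) ≤ s - 1) hq,
    mul_nonneg (mul_nonneg (by linarith : (0 : ℝ) ≤ s - 1) hq) (by linarith : (0 : ℝ) ≤ m - 1),
    mul_nonneg (mul_nonneg (pow_nonneg hx 3) (sq_nonneg s)) (by linarith : (0 : ℝ) ≤ s - 1)]

noncomputable def scaledH (m x s : ℝ) : ℝ :=
  (-x ^ 2 + m * (1 - x * s) / s ^ 2) * exp (2 * x * (s - 1))

lemma scaledH_one : scaledH m x 1 = m * (1 - x) - x ^ 2 := by
  simp only [scaledH, mul_one, one_pow, div_one, sub_self, mul_zero, exp_zero]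
  ring

lemma le_scaledH_one_sub_scaledH (hm : 1 ≤ m) (hx : 0 ≤ x) (hs1 : 1 ≤ s) (hs2 : s ^ 2 ≤ 2) :
    7 * m / 16 * (1 - 1 / s ^ 2) ≤ scaledH m x 1 - scaledH m x s := by
  have hs0 : 0 < s := by linarith
  set Q := m * (1 - x * s) - x ^ 2 * s ^ 2 with hQ_def
  set t := 2 * x * (s - 1) with ht_def
  set B := (m * (1 - x) - x ^ 2) * s ^ 2 - 7 * m / 16 * (s ^ 2 - 1)
  have hQB : Q * exp t ≤ B := by
    rcases le_or_gt Q 0 with hQ | hQ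
    · calc Q * exp t ≤ Q * (1 + t) := by
            rw [add_comm]; exact mul_le_mul_of_nonpos_left (add_one_le_exp t) hQ
        _ ≤ B := scaledH_numerator_mul_one_add_le hm hx hs1
    · -- `Q > 0` forces `x s < 1`, and `s ≤ √2 < 3/2`
      have ht : t < 1 := by
        have hxs : x * s < 1 := by nlinarith
        nlinarith
      calc Q * exp t ≤ Q * (1 / (1 - t)) :=
            mul_le_mul_of_nonneg_left (exp_bound_div_one_sub_of_interval (by positivity) ht) hQ.le
        _ ≤ B := by
            rw [mul_one_div, div_le_iff₀ (by linarith)]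
            exact scaledH_numerator_le_mul_one_sub hm hx hs1 hs2
  calc 7 * m / 16 * (1 - 1 / s ^ 2) = (m * (1 - x) - x ^ 2) - B / s ^ 2 := by
        field_simp; ring
    _ ≤ (m * (1 - x) - x ^ 2) - Q * exp t / s ^ 2 := by gcongr
    _ = scaledH m x 1 - scaledH m x s := by
        rw [scaledH_one, scaledH, hQ_def, ht_def]; field_simp; ring

end ScaledProfile

noncomputable def radialH (m α c R r : ℝ) : ℝ :=
  c ^ 2 * (-α ^ 2 + m * (1 + α * r) / r ^ 2) * exp (-2 * α * (r - R))

lemma radialH_eq_scaledH (m α c : ℝ) {R r : ℝ} (hR : R ≠ 0) (hr : r ≠ 0) :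
    radialH m α c R r = c ^ 2 / R ^ 2 * scaledH m (-α * R) (r / R) := by
  have harg : 2 * (-α * R) * (r / R - 1) = -2 * α * (r - R) := by field_simp
  rw [radialH, scaledH, harg]
  field_simp
  ring

lemma le_radialH_sub_radialH {m α R r : ℝ} (c : ℝ) (hm : 1 ≤ m) (hα : α ≤ 0) (hR : 0 < R)
    (hRr : R ≤ r) (hr : r ^ 2 ≤ 2 * R ^ 2) :
    7 * m / 16 * c ^ 2 * (1 / R ^ 2 - 1 / r ^ 2) ≤ radialH m α c R R - radialH m α c R r := by
  have key := le_scaledH_one_sub_scaledH (x := -α * R) (s := r / R) hm (by nlinarith)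
    ((one_le_div hR).2 hRr) (by rw [div_pow, div_le_iff₀ (by positivity)]; linarith)
  have hr0 : r ≠ 0 := (hR.trans_le hRr).ne'
  rw [radialH_eq_scaledH _ _ _ hR.ne' hR.ne', radialH_eq_scaledH _ _ _ hR.ne' hr0, ← mul_sub,
    div_self hR.ne']
  calc 7 * m / 16 * c ^ 2 * (1 / R ^ 2 - 1 / r ^ 2)
      = c ^ 2 / R ^ 2 * (7 * m / 16 * (1 - 1 / (r / R) ^ 2)) := by field_simp
    _ ≤ _ := by gcongr

lemma integral_one_div_sq_sub_one_div_sq {a b : ℝ} (ha : 0 < a) (hab : a ≤ b) :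
    ∫ r in a..b, (1 / a ^ 2 - 1 / r ^ 2) = (b - a) ^ 2 / (a ^ 2 * b) := by
  have hpos : ∀ r ∈ Set.uIcc a b, 0 < r := fun r hr => by
    rw [Set.uIcc_of_le hab] at hr; exact ha.trans_le hr.1
  have hb : b ≠ 0 := (ha.trans_le hab).ne'
  rw [intervalIntegral.integral_eq_sub_of_hasDerivAt (f := fun r => r / a ^ 2 + r⁻¹)]
  · field_simp; ring
  · intro r hr
    simpa [one_div, sub_eq_add_neg] using
      ((hasDerivAt_id r).div_const (a ^ 2)).fun_add (hasDerivAt_inv (hpos r hr).ne')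
  · exact ContinuousOn.intervalIntegrable
      (by fun_prop (disch := intro r hr; exact (pow_pos (hpos r hr) 2).ne'))

lemma pow_sub_one_le_mul_sub_one {σ : ℝ} (n : ℕ) (hσ : 1 ≤ σ) :
    σ ^ n - 1 ≤ n * σ ^ (n - 1) * (σ - 1) := by
  have h := abs_pow_sub_pow_le σ 1 n
  rwa [one_pow, abs_of_nonneg (by linarith [one_le_pow₀ (n := n) hσ]),
    abs_of_nonneg (by linarith), abs_one, abs_of_nonneg (by linarith), max_eq_left hσ,
    mul_comm (σ - 1), mul_right_comm] at h

lemma sq_div_le_of_pow_eq {n : ℕ} {σ β : ℝ} (hn : n ≠ 0) (hσ : 1 ≤ σ)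
    (hσn : σ ^ n = 1 + β / 2) (hβ : β ≤ 2) : β ^ 2 / (16 * n ^ 2) ≤ (σ - 1) ^ 2 / σ := by
  have hσ0 : 0 < σ := by linarith
  have hβ0 : 0 ≤ β := by linarith [one_le_pow₀ (n := n) hσ]
  have hβσ : β * σ ≤ 4 * n * (σ - 1) := by
    have h := mul_le_mul_of_nonneg_right (pow_sub_one_le_mul_sub_one n hσ) hσ0.le
    rw [mul_right_comm, mul_assoc (n : ℝ), ← pow_succ,
      Nat.sub_add_cancel (Nat.one_le_iff_ne_zero.2 hn), hσn] at h
    nlinarith [mul_nonneg (mul_nonneg n.cast_nonneg (sub_nonneg.2 hσ))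
      (by linarith : 0 ≤ 1 - β / 2)]
  rw [div_le_div_iff₀ (by positivity) hσ0]
  nlinarith [mul_self_le_mul_self (by positivity) hβσ,
    mul_nonneg (sq_nonneg β) (sub_nonneg.2 hσ), hσ0]

lemma le_integral_one_div_sq_sub_mul_pow {n : ℕ} (hn : 2 ≤ n) {R σ β : ℝ} (hR : 0 < R)
    (hσ : 1 ≤ σ) (hσn : σ ^ n = 1 + β / 2) (hβ : β ≤ 2) :
    R ^ (n - 2) * β ^ 2 / (16 * n ^ 2) ≤
      ∫ r in R..R * σ, (1 / R ^ 2 - 1 / r ^ 2) * r ^ (n - 1) := by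
  have hRσ : R ≤ R * σ := le_mul_of_one_le_right hR.le hσ
  have hpos : ∀ r ∈ Set.uIcc R (R * σ), 0 < r := fun r hr => by
    rw [Set.uIcc_of_le hRσ] at hr; exact hR.trans_le hr.1
  obtain ⟨k, rfl⟩ : ∃ k, n = k + 2 := ⟨n - 2, by omega⟩
  rw [show k + 2 - 2 = k from rfl, show k + 2 - 1 = k + 1 from rfl]
  calc R ^ k * β ^ 2 / (16 * ((k + 2 : ℕ) : ℝ) ^ 2)
      ≤ R ^ k * ((σ - 1) ^ 2 / σ) := by
        rw [mul_div_assoc]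
        exact mul_le_mul_of_nonneg_left (sq_div_le_of_pow_eq (by omega) hσ hσn hβ) (by positivity)
    _ = R ^ (k + 1) * ∫ r in R..R * σ, (1 / R ^ 2 - 1 / r ^ 2) := by
        have hσ0 : σ ≠ 0 := by positivity
        rw [integral_one_div_sq_sub_one_div_sq hR hRσ]
        field_simp; ring
    _ = ∫ r in R..R * σ, R ^ (k + 1) * (1 / R ^ 2 - 1 / r ^ 2) :=
        (intervalIntegral.integral_const_mul _ _).symm
    _ ≤ ∫ r in R..R * σ, (1 / R ^ 2 - 1 / r ^ 2) * r ^ (k + 1) := by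
        refine intervalIntegral.integral_mono_on hRσ ?_ ?_ fun r ⟨hRr, _⟩ => ?_
        · exact ContinuousOn.intervalIntegrable
            (by fun_prop (disch := intro r hr; exact (pow_pos (hpos r hr) 2).ne'))
        · exact ContinuousOn.intervalIntegrable
            (by fun_prop (disch := intro r hr; exact (pow_pos (hpos r hr) 2).ne'))
        · have : 1 / r ^ 2 ≤ 1 / R ^ 2 := by gcongr
          rw [mul_comm]
          gcongr

lemma integral_le_integral_radialH_sub_mul_pow {m α R b : ℝ} (c : ℝ) (k : ℕ) (hm : 1 ≤ m)
    (hα : α ≤ 0) (hR : 0 < R) (hRb : R ≤ b) (hb : b ^ 2 ≤ 2 * R ^ 2) :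
    ∫ r in R..b, 7 * m / 16 * c ^ 2 * (1 / R ^ 2 - 1 / r ^ 2) * r ^ k ≤
      ∫ r in R..b, (radialH m α c R R - radialH m α c R r) * r ^ k := by
  have hpos : ∀ r ∈ Set.uIcc R b, 0 < r := fun r hr => by
    rw [Set.uIcc_of_le hRb] at hr; exact hR.trans_le hr.1
  refine intervalIntegral.integral_mono_on hRb ?_ ?_ fun r ⟨hRr, hrb⟩ => ?_
  · exact ContinuousOn.intervalIntegrable
      (by fun_prop (disch := intro r hr; exact (pow_pos (hpos r hr) 2).ne'))
  · exact ContinuousOn.intervalIntegrable (by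
      unfold radialH; fun_prop (disch := intro r hr; exact (pow_pos (hpos r hr) 2).ne'))
  · have hr : r ^ 2 ≤ 2 * R ^ 2 := le_trans (by gcongr; linarith) hb
    exact mul_le_mul_of_nonneg_right (le_radialH_sub_radialH c hm hα hR hRr hr)
      (pow_nonneg (hR.le.trans hRr) _)

theorem stmt_6_general (n : ℕ) (hn : 2 ≤ n) (R α c β : ℝ) (hR : 0 < R)
    (hα0 : α < 0) (hβ0 : 0 ≤ β) (hβ2 : β ≤ 2)
    (R₂ : ℝ) (hR₂ : R₂ = R * (1 + β / 2) ^ ((1 : ℝ) / n))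
    (h : ℝ → ℝ)
    (hh : ∀ r, h r = c ^ 2 * (-α ^ 2 + ((n : ℝ) - 1) * (1 + α * r) / r ^ 2) *
      Real.exp (-2 * α * (r - R))) :
    (∫ r in R..R₂, (h R - h r) * r ^ (n - 1)) ≥
      7 * ((n : ℝ) - 1) * R ^ (n - 2) / (16 ^ 2 * n ^ 2) * c ^ 2 * β ^ 2 := by
  obtain rfl : h = radialH ((n : ℝ) - 1) α c R := funext hh
  set σ := (1 + β / 2) ^ ((1 : ℝ) / n) with hσ
  have hσn : σ ^ n = 1 + β / 2 := by
    rw [hσ, one_div]; exact rpow_inv_natCast_pow (by linarith) (by omega)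
  have hσ1 : 1 ≤ σ := one_le_rpow (by linarith) (by positivity)
  have hσ2 : σ ^ 2 ≤ 2 := (pow_le_pow_right₀ hσ1 hn).trans (by linarith)
  have hm : 1 ≤ (n : ℝ) - 1 := by
    have : (2 : ℝ) ≤ n := by exact_mod_cast hn
    linarith
  subst hR₂
  calc 7 * ((n : ℝ) - 1) * R ^ (n - 2) / (16 ^ 2 * n ^ 2) * c ^ 2 * β ^ 2
      = 7 * ((n : ℝ) - 1) / 16 * c ^ 2 * (R ^ (n - 2) * β ^ 2 / (16 * n ^ 2)) := by ring
    _ ≤ 7 * ((n : ℝ) - 1) / 16 * c ^ 2 *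
          ∫ r in R..R * σ, (1 / R ^ 2 - 1 / r ^ 2) * r ^ (n - 1) := by
        gcongr; exact le_integral_one_div_sq_sub_mul_pow hn hR hσ1 hσn hβ2
    _ = ∫ r in R..R * σ,
          7 * ((n : ℝ) - 1) / 16 * c ^ 2 * (1 / R ^ 2 - 1 / r ^ 2) * r ^ (n - 1) := by
        simp only [mul_assoc, intervalIntegral.integral_const_mul]
    _ ≤ _ := integral_le_integral_radialH_sub_mul_pow c (n - 1) hm hα0.le hR
        (le_mul_of_one_le_right hR.le hσ1) (by rw [mul_pow]; nlinarith)

theorem stmt_6 (n : ℕ) (hn : 2 ≤ n) (R α c β : ℝ) (hR : 0 < R)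
    (hα1 : -(1 / R) < α) (hα0 : α < 0) (hc : 0 < c) (hβ0 : 0 ≤ β) (hβ2 : β ≤ 2)
    (R₂ : ℝ) (hR₂ : R₂ = R * (1 + β / 2) ^ ((1 : ℝ) / n))
    (h : ℝ → ℝ)
    (hh : ∀ r, h r = c ^ 2 * (-α ^ 2 + ((n : ℝ) - 1) * (1 + α * r) / r ^ 2) *
      Real.exp (-2 * α * (r - R))) :
    (∫ r in R..R₂, (h R - h r) * r ^ (n - 1)) ≥
      7 * ((n : ℝ) - 1) * R ^ (n - 2) / (16 ^ 2 * n ^ 2) * c ^ 2 * β ^ 2 :=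
  stmt_6_general n hn R α c β hR hα0 hβ0 hβ2 R₂ hR₂ h hh
end

section
/- Let Ω, B, B₁, B₂ ⊂ ℝⁿ with B, B₁, B₂ concentric balls centered at the origin of radii R₁ ≤ R ≤ R₂, |Ω| = |B|, |Ω ∩ B| = |B₁|, and |Ω \ B| = |B₂ \ B|. If h : (0,∞) → ℝ is monotone decreasing and integrable on bounded sets, then ∫_Ω h(|x|) dx ≤ ∫_{B₁} h(|x|) dx + ∫_{B₂\B} h(|x|) dx, and consequently ∫_B h(|x|) dx − ∫_Ω h(|x|) dx ≥ ∫_{B₂\B} (h(R) − h(|x|)) dx. -/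
/-!
Split `Ω` along the sphere `|x| = R`. The part `Ω ∩ B` has the volume of `B₁` and the part `Ω \ B`
has the volume of the shell `B₂ \ B`. Among sets of a given volume avoiding an inner ball, the
concentric shell of that volume just outside it collects the largest values of the decreasing
profile `h(|x|)`: exchanging the part of a competitor outside the shell for the missing part of
the shell trades values `≤ h(R₂)` for values `≥ h(R₂)`. For the second inequality,
`|B \ B₁| = |B₂ \ B|` because `|Ω| = |B|`, and `h(|x|) ≥ h(R)` on `B \ B₁`.
-/

open MeasureTheory Metric Set

section Exchange

variable {α : Type*} [MeasurableSpace α] {μ : Measure α}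

theorem setIntegral_le_setIntegral_of_measure_eq {f : α → ℝ} {s t : Set α} (c : ℝ)
    (hs : MeasurableSet s) (ht : MeasurableSet t) (hst : μ s = μ t) (hfin : μ s ≠ ⊤)
    (hfs : IntegrableOn f s μ) (hft : IntegrableOn f t μ)
    (hle : ∀ᵐ x ∂μ.restrict (s \ t), f x ≤ c) (hge : ∀ᵐ x ∂μ.restrict (t \ s), c ≤ f x) :
    ∫ x in s, f x ∂μ ≤ ∫ x in t, f x ∂μ := by
  have hsdiff : μ.real (s \ t) = μ.real (t \ s) := by
    have hs_split := measureReal_inter_add_sdiff ht hfin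
    have ht_split := measureReal_inter_add_sdiff hs (hst ▸ hfin)
    have hreal : μ.real s = μ.real t := by rw [measureReal_def, hst, measureReal_def]
    rw [inter_comm] at hs_split
    linarith
  have hconst (u : Set α) : ∫ _ in u, c ∂μ = c * μ.real u := by
    rw [setIntegral_const, smul_eq_mul, mul_comm]
  calc ∫ x in s, f x ∂μ = ∫ x in s ∩ t, f x ∂μ + ∫ x in s \ t, f x ∂μ :=
        (integral_inter_add_sdiff ht hfs).symm
    _ ≤ ∫ x in t ∩ s, f x ∂μ + c * μ.real (t \ s) := by
        rw [inter_comm, ← hsdiff, ← hconst]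
        gcongr 1
        exact setIntegral_mono_ae_restrict (hfs.mono_set sdiff_subset)
          (integrableOn_const (measure_ne_top_of_subset sdiff_subset hfin)) hle
    _ ≤ ∫ x in t ∩ s, f x ∂μ + ∫ x in t \ s, f x ∂μ := by
        rw [← hconst]
        gcongr 1
        exact setIntegral_mono_ae_restrict
          (integrableOn_const (measure_ne_top_of_subset sdiff_subset (hst ▸ hfin)))
          (hft.mono_set sdiff_subset) hge
    _ = ∫ x in t, f x ∂μ := integral_inter_add_sdiff hs hft

theorem measure_sdiff_eq_of_measure_inter_eq {s t u v : Set α} (ht : MeasurableSet t)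
    (hu : MeasurableSet u) (hut : u ⊆ t) (hu_fin : μ u ≠ ⊤) (hst : μ s = μ t)
    (hinter : μ (s ∩ t) = μ u) (hsdiff : μ (s \ t) = μ v) : μ (t \ u) = μ v := by
  have hs_split := measure_inter_add_sdiff (μ := μ) s ht
  have ht_split := measure_inter_add_sdiff (μ := μ) t hu
  rw [inter_eq_self_of_subset_right hut] at ht_split
  rw [hinter, hsdiff, hst, ← ht_split] at hs_split
  exact ((ENNReal.add_right_inj hu_fin).mp hs_split).symm

end Exchange

section Radial

variable {E : Type*} [NormedAddCommGroup E] [MeasurableSpace E] [OpensMeasurableSpace E]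
  {μ : Measure E} {h : ℝ → ℝ} {S : Set E} {r r' : ℝ}

theorem setIntegral_le_setIntegral_shell_of_antitoneOn [NullSingletonClass μ]
    (hh : AntitoneOn h (Ioi 0)) (hr' : 0 < r') (hS : MeasurableSet S) (hSr : Disjoint S (ball 0 r))
    (hvol : μ S = μ (ball 0 r' \ ball 0 r)) (hfin : μ S ≠ ⊤)
    (hfS : IntegrableOn (fun x => h ‖x‖) S μ)
    (hf : IntegrableOn (fun x => h ‖x‖) (ball 0 r' \ ball 0 r) μ) :
    ∫ x in S, h ‖x‖ ∂μ ≤ ∫ x in ball 0 r' \ ball 0 r, h ‖x‖ ∂μ := by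
  have hshell : MeasurableSet (ball (0 : E) r' \ ball 0 r) :=
    measurableSet_ball.diff measurableSet_ball
  refine setIntegral_le_setIntegral_of_measure_eq (h r') hS hshell hvol hfin hfS hf ?_ ?_
  · refine ae_restrict_of_forall_mem (hS.diff hshell) fun x ⟨hxS, hx⟩ => ?_
    have hxr' : r' ≤ ‖x‖ := by
      by_contra! hlt
      exact hx ⟨mem_ball_zero_iff.mpr hlt, hSr.notMem_of_mem_left hxS⟩
    exact hh hr' (hr'.trans_le hxr') hxr'
  · have hx₀ : ∀ᵐ x ∂μ, x ≠ (0 : E) := compl_mem_ae_iff.mpr (measure_singleton 0)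
    filter_upwards [ae_restrict_of_ae hx₀, ae_restrict_mem (hshell.diff hS)] with x hx₀ hx
    have hxr' : ‖x‖ < r' := mem_ball_zero_iff.mp hx.1.1
    exact hh (norm_pos_iff.mpr hx₀) hr' hxr'.le

variable [ProperSpace E] [IsFiniteMeasureOnCompacts μ] {Ω : Set E} {R R₁ R₂ : ℝ}

theorem setIntegral_le_setIntegral_ball_add_setIntegral_shell [NullSingletonClass μ]
    (hh : AntitoneOn h (Ioi 0)) (hR₁ : 0 < R₁) (hR₂ : 0 < R₂)
    (hΩ : MeasurableSet Ω) (hΩb : Bornology.IsBounded Ω)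
    (hcap : μ (Ω ∩ ball 0 R) = μ (ball 0 R₁))
    (hdiff : μ (Ω \ ball 0 R) = μ (ball 0 R₂ \ ball 0 R))
    (hint : ∀ s : Set E, Bornology.IsBounded s → IntegrableOn (fun x => h ‖x‖) s μ) :
    ∫ x in Ω, h ‖x‖ ∂μ ≤ (∫ x in ball 0 R₁, h ‖x‖ ∂μ) + ∫ x in ball 0 R₂ \ ball 0 R, h ‖x‖ ∂μ := by
  have hΩin : Bornology.IsBounded (Ω ∩ ball 0 R) := hΩb.subset inter_subset_left
  have hΩout : Bornology.IsBounded (Ω \ ball 0 R) := hΩb.subset sdiff_subset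
  have hin : ∫ x in Ω ∩ ball 0 R, h ‖x‖ ∂μ ≤ ∫ x in ball 0 R₁, h ‖x‖ ∂μ := by
    simpa only [ball_zero, sdiff_empty] using
      setIntegral_le_setIntegral_shell_of_antitoneOn (r := 0) hh hR₁ (hΩ.inter measurableSet_ball)
        (by simp) (by simpa using hcap) hΩin.measure_lt_top.ne (hint _ hΩin)
        (by simpa using hint _ isBounded_ball)
  have hout : ∫ x in Ω \ ball 0 R, h ‖x‖ ∂μ ≤ ∫ x in ball 0 R₂ \ ball 0 R, h ‖x‖ ∂μ :=
    setIntegral_le_setIntegral_shell_of_antitoneOn hh hR₂ (hΩ.diff measurableSet_ball)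
      disjoint_sdiff_left hdiff hΩout.measure_lt_top.ne (hint _ hΩout)
      (hint _ (isBounded_ball.subset sdiff_subset))
  rw [← integral_inter_add_sdiff measurableSet_ball (hint Ω hΩb)]
  exact add_le_add hin hout

theorem setIntegral_shell_sub_le_setIntegral_ball_sub (hh : AntitoneOn h (Ioi 0))
    (hR₁ : 0 < R₁) (hR₁R : R₁ ≤ R) (hvol : μ Ω = μ (ball 0 R))
    (hcap : μ (Ω ∩ ball 0 R) = μ (ball 0 R₁))
    (hdiff : μ (Ω \ ball 0 R) = μ (ball 0 R₂ \ ball 0 R))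
    (hint : ∀ s : Set E, Bornology.IsBounded s → IntegrableOn (fun x => h ‖x‖) s μ)
    (hΩ : ∫ x in Ω, h ‖x‖ ∂μ ≤
      (∫ x in ball 0 R₁, h ‖x‖ ∂μ) + ∫ x in ball 0 R₂ \ ball 0 R, h ‖x‖ ∂μ) :
    ∫ x in ball 0 R₂ \ ball 0 R, (h R - h ‖x‖) ∂μ ≤
      (∫ x in ball 0 R, h ‖x‖ ∂μ) - ∫ x in Ω, h ‖x‖ ∂μ := by
  have hshell : μ.real (ball 0 R \ ball 0 R₁) = μ.real (ball 0 R₂ \ ball 0 R) := by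
    rw [measureReal_def, measure_sdiff_eq_of_measure_inter_eq measurableSet_ball
      measurableSet_ball (ball_subset_ball hR₁R) measure_ball_lt_top.ne hvol hcap hdiff,
      measureReal_def]
  have hinner : h R * μ.real (ball 0 R \ ball 0 R₁) ≤
      (∫ x in ball 0 R, h ‖x‖ ∂μ) - ∫ x in ball 0 R₁, h ‖x‖ ∂μ := by
    rw [← integral_inter_add_sdiff measurableSet_ball (hint _ isBounded_ball),
      inter_eq_self_of_subset_right (ball_subset_ball hR₁R), add_sub_cancel_left]
    refine setIntegral_ge_of_const_le_real (measurableSet_ball.diff measurableSet_ball)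
      (measure_ne_top_of_subset sdiff_subset measure_ball_lt_top.ne) (fun x ⟨hxR, hxR₁⟩ => ?_)
      (hint _ (isBounded_ball.subset sdiff_subset))
    have hR₁x : R₁ ≤ ‖x‖ := not_lt.mp (mt mem_ball_zero_iff.mpr hxR₁)
    exact hh (hR₁.trans_le hR₁x) (hR₁.trans_le hR₁R) (mem_ball_zero_iff.mp hxR).le
  have hbdd : Bornology.IsBounded (ball (0 : E) R₂ \ ball 0 R) := isBounded_ball.subset sdiff_subset
  rw [integral_sub (integrableOn_const (C := h R) hbdd.measure_lt_top.ne) (hint _ hbdd),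
    setIntegral_const, smul_eq_mul, mul_comm, ← hshell]
  linarith

end Radial

theorem stmt_9 (n : ℕ) (hn : 1 ≤ n) (Ω : Set (EuclideanSpace ℝ (Fin n)))
    (R R₁ R₂ : ℝ) (hR₁ : 0 < R₁) (h12 : R₁ ≤ R) (h2R : R ≤ R₂)
    (hΩm : MeasurableSet Ω) (hΩb : Bornology.IsBounded Ω)
    (B : Set (EuclideanSpace ℝ (Fin n))) (B₁ : Set (EuclideanSpace ℝ (Fin n)))
    (B₂ : Set (EuclideanSpace ℝ (Fin n)))
    (hB : B = Metric.ball (0 : EuclideanSpace ℝ (Fin n)) R)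
    (hB₁ : B₁ = Metric.ball (0 : EuclideanSpace ℝ (Fin n)) R₁)
    (hB₂ : B₂ = Metric.ball (0 : EuclideanSpace ℝ (Fin n)) R₂)
    (hvol : volume Ω = volume B)
    (hcap : volume (Ω ∩ B) = volume B₁)
    (hdiff : volume (Ω \ B) = volume (B₂ \ B))
    (h : ℝ → ℝ) (hmono : AntitoneOn h (Set.Ioi 0))
    (hint : ∀ s : Set (EuclideanSpace ℝ (Fin n)), Bornology.IsBounded s →
      IntegrableOn (fun x => h ‖x‖) s) :
    (∫ x in Ω, h ‖x‖) ≤ (∫ x in B₁, h ‖x‖) + ∫ x in B₂ \ B, h ‖x‖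
      ∧ (∫ x in B, h ‖x‖) - (∫ x in Ω, h ‖x‖) ≥ ∫ x in B₂ \ B, (h R - h ‖x‖) := by
  subst hB hB₁ hB₂
  have : Nonempty (Fin n) := ⟨⟨0, hn⟩⟩
  have hΩ := setIntegral_le_setIntegral_ball_add_setIntegral_shell hmono hR₁
    (hR₁.trans_le (h12.trans h2R)) hΩm hΩb hcap hdiff hint
  exact ⟨hΩ, setIntegral_shell_sub_le_setIntegral_ball_sub hmono hR₁ h12 hvol hcap hdiff hint hΩ⟩
end
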